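/- arXiv:1510.02122 — 2 statements merged into one kernel-verified Lean document; each statement's English description precedes it below -/
import Mathlib

section
/- Let (J_1,…,J_{2n}) be a dual Grassmann necklace of type (n,2n) and let f be its associated bounded affine permutation. If R(J_i) = J_{i'+1} for all i ∈ [2n], where i' = 2n+1−i and indices are taken modulo 2n, then f is symmetric, i.e., f(2n+1−a) = 4n+1−f(a) for all a ∈ ℤ. -/
/-! Write `x' = 2n+1-x`. Reflection turns `R` into complementation in `[2n]`, so the
hypothesis `R(J_i) = J_{i'+1}` and its shifted form `R(J_{i+1}) = J_{i'}` say
`x ∈ J_i ↔ x' ∉ J_{i'+1}` and `x ∈ J_{i+1} ↔ x' ∉ J_{i'}`. Hence loops `a ∈ J_a`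
(`f(a) = a+2n`) are exchanged with fixed points `a' ∉ J_{a'+1}` (`f(a') = a'`), and
`x ∈ J_i ∖ J_{i+1}` iff `x' ∈ J_{i'} ∖ J_{i'+1}`, i.e. `f̄(x) = i` iff `f̄(x') = i'` off the
loops. In that case `f(a) + f(a') ≡ 4n+1 (mod 2n)`, and `a' < f(a') < a'+2n` pins the sum
down to `4n+1`. -/

/-- `R(I) = [2n] \ {2n+1-i : i ∈ I}` for subsets of `[2n] = {1,…,2n}`. -/
noncomputable def Rset (n : ℕ) (I : Finset ℤ) : Finset ℤ :=
  (Finset.Icc (1 : ℤ) (2 * (n : ℤ))) \ (I.image fun x => 2 * (n : ℤ) + 1 - x)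

/-- A bounded affine permutation of type `(k,n)`. -/
def IsBAP (n k : ℕ) (f : ℤ → ℤ) : Prop :=
  Function.Bijective f ∧
  (∀ i : ℤ, f (i + (n : ℤ)) = f i + (n : ℤ)) ∧
  (∀ i : ℤ, i ≤ f i ∧ f i ≤ i + (n : ℤ)) ∧
  (∑ i ∈ Finset.Icc (1 : ℤ) (n : ℤ), (f i - i)) = (k : ℤ) * (n : ℤ)

/-- A bounded affine permutation of type `(n,2n)` is symmetric if
`f(2n+1-a) = 4n+1-f(a)` for all integers `a`. -/
def IsSymmBAP (n : ℕ) (f : ℤ → ℤ) : Prop :=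
  ∀ a : ℤ, f (2 * (n : ℤ) + 1 - a) = 4 * (n : ℤ) + 1 - f a

/-- `f̄(i)`: the representative in `[1,n]` of `f(i)` modulo `n`. -/
def fbar (n : ℕ) (f : ℤ → ℤ) (i : ℤ) : ℤ := (f i - 1) % (n : ℤ) + 1

open scoped Classical in
/-- The `a`-anti-exceedance set `I_a(f) = {i ∈ [n] : f̄⁻¹(i) >_a i or f(i) = i+n}`,
where `x ≤_a y ↔ (x-a) mod n ≤ (y-a) mod n` is the cyclic shift of the order on `[1,n]`. -/
noncomputable def antiExc (n : ℕ) (f : ℤ → ℤ) (a : ℤ) : Finset ℤ :=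
  (Finset.Icc (1 : ℤ) (n : ℤ)).filter fun i =>
    f i = i + (n : ℤ) ∨
      ∃ j ∈ Finset.Icc (1 : ℤ) (n : ℤ),
        fbar n f j = i ∧ (i - a) % (n : ℤ) < (j - a) % (n : ℤ)

/-- A Grassmann necklace of type `(k,n)`, encoded as an `n`-periodic family of
`k`-subsets of `[1,n]` indexed by `ℤ`. -/
def IsGN (n k : ℕ) (I : ℤ → Finset ℤ) : Prop :=
  (∀ i : ℤ, I (i + (n : ℤ)) = I i) ∧
  ∀ i ∈ Finset.Icc (1 : ℤ) (n : ℤ),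
    I i ⊆ Finset.Icc (1 : ℤ) (n : ℤ) ∧ (I i).card = k ∧
    (i ∈ I i → ∃ j ∈ Finset.Icc (1 : ℤ) (n : ℤ), I (i + 1) = insert j ((I i).erase i)) ∧
    (i ∉ I i → I (i + 1) = I i)

/-- `f` is the bounded affine permutation associated to the Grassmann necklace `I`:
`f̄(i) = j` if `I_{i+1} = (I_i ∖ {i}) ∪ {j}` with `j ≠ i`; `f(i) = i` if `I_{i+1} = I_i`
and `i ∉ I_i`; `f(i) = i+n` if `I_{i+1} = I_i` and `i ∈ I_i`. -/
def GNAssoc (n : ℕ) (I : ℤ → Finset ℤ) (f : ℤ → ℤ) : Prop :=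
  ∀ i ∈ Finset.Icc (1 : ℤ) (n : ℤ),
    (I (i + 1) = I i → i ∉ I i → f i = i) ∧
    (I (i + 1) = I i → i ∈ I i → f i = i + (n : ℤ)) ∧
    (I (i + 1) ≠ I i → fbar n f i ≠ i ∧ I (i + 1) = insert (fbar n f i) ((I i).erase i))

/-- A dual Grassmann necklace of type `(k,n)`, encoded as an `n`-periodic family of
`k`-subsets of `[1,n]` indexed by `ℤ`. -/
def IsDGN (n k : ℕ) (J : ℤ → Finset ℤ) : Prop :=
  (∀ i : ℤ, J (i + (n : ℤ)) = J i) ∧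
  ∀ i ∈ Finset.Icc (1 : ℤ) (n : ℤ),
    J i ⊆ Finset.Icc (1 : ℤ) (n : ℤ) ∧ (J i).card = k ∧
    (i ∈ J (i + 1) → ∃ j ∈ Finset.Icc (1 : ℤ) (n : ℤ), J i = insert j ((J (i + 1)).erase i)) ∧
    (i ∉ J (i + 1) → J i = J (i + 1))

/-- `f` is the bounded affine permutation associated to the dual Grassmann necklace `J`:
`f̄⁻¹(i) = j` if `J_i = (J_{i+1} ∖ {i}) ∪ {j}` with `j ≠ i`; `f(i) = i` if `J_i = J_{i+1}`
and `i ∉ J_{i+1}`; `f(i) = i+n` if `J_i = J_{i+1}` and `i ∈ J_{i+1}`. -/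
def DGNAssoc (n : ℕ) (J : ℤ → Finset ℤ) (f : ℤ → ℤ) : Prop :=
  ∀ i ∈ Finset.Icc (1 : ℤ) (n : ℤ),
    (J i = J (i + 1) → i ∉ J (i + 1) → f i = i) ∧
    (J i = J (i + 1) → i ∈ J (i + 1) → f i = i + (n : ℤ)) ∧
    (J i ≠ J (i + 1) →
      ∃ j ∈ Finset.Icc (1 : ℤ) (n : ℤ),
        j ≠ i ∧ fbar n f j = i ∧ J i = insert j ((J (i + 1)).erase i))

/-- The minor `Δ_I`: determinant of the `k×k` matrix whose columns are the columns `v i`,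
`i ∈ I`, in increasing order (and `0` if `I` does not have exactly `k` elements). -/
noncomputable def Delta {k : ℕ} (v : ℤ → Fin k → ℝ) (I : Finset ℤ) : ℝ :=
  if h : I.card = k then
    Matrix.det (Matrix.of fun r c : Fin k => v (I.orderIsoOfFin h c).1 r)
  else 0

/-- The `k×n` matrix with columns `v 1, …, v n` is totally nonnegative:
it has (full) rank `k` and all maximal minors are nonnegative. -/
def IsTNN (n k : ℕ) (v : ℤ → Fin k → ℝ) : Prop :=
  Submodule.span ℝ (v '' Set.Icc (1 : ℤ) (n : ℤ)) = ⊤ ∧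
  ∀ I ⊆ Finset.Icc (1 : ℤ) (n : ℤ), I.card = k → 0 ≤ Delta v I

/-- `f` is the span-permutation of the periodically extended column family `v`:
`f(i) = min {r ≥ i : v i ∈ span (v (i+1), …, v r)}` (the empty span being `{0}`). -/
def IsSpanPerm {k : ℕ} (v : ℤ → Fin k → ℝ) (f : ℤ → ℤ) : Prop :=
  ∀ i : ℤ, i ≤ f i ∧ v i ∈ Submodule.span ℝ (v '' Set.Ioc i (f i)) ∧
    ∀ r : ℤ, i ≤ r → v i ∈ Submodule.span ℝ (v '' Set.Ioc i r) → f i ≤ r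

/-- `g(i) = max {r ≤ i : v i ∈ span (v r, …, v (i-1))}` (the empty span being `{0}`). -/
def IsRevSpanPerm {k : ℕ} (v : ℤ → Fin k → ℝ) (g : ℤ → ℤ) : Prop :=
  ∀ i : ℤ, g i ≤ i ∧ v i ∈ Submodule.span ℝ (v '' Set.Ico (g i) i) ∧
    ∀ r : ℤ, r ≤ i → v i ∈ Submodule.span ℝ (v '' Set.Ico r i) → r ≤ g i

/-- The matroid `𝓜(M) = {I : Δ_I(M) ≠ 0}` of the `k×n` matrix with columns `v 1, …, v n`. -/
def Mat (n k : ℕ) (v : ℤ → Fin k → ℝ) : Set (Finset ℤ) :=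
  {I | I ⊆ Finset.Icc (1 : ℤ) (n : ℤ) ∧ I.card = k ∧ Delta v I ≠ 0}

/-- `I ≤_a J` for subsets of `[1,n]`: elementwise comparison, after sorting each set in
`≤_a`-increasing order, in the cyclically shifted order `x ≤_a y ↔ (x-a) mod n ≤ (y-a) mod n`. -/
def cycLE (n : ℕ) (a : ℤ) (I J : Finset ℤ) : Prop :=
  List.Forall₂ (· ≤ ·)
    ((I.image fun x => (x - a) % (n : ℤ)).sort (· ≤ ·))
    ((J.image fun x => (x - a) % (n : ℤ)).sort (· ≤ ·))

/-- `Ia` is the `≤_a`-minimal element of the matroid of `v` (i.e. `Ia = I_a(M)`). -/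
def IsCycMin (n k : ℕ) (v : ℤ → Fin k → ℝ) (a : ℤ) (Ia : Finset ℤ) : Prop :=
  Ia ∈ Mat n k v ∧ ∀ J ∈ Mat n k v, cycLE n a Ia J

/-- The columns of `M · xᵢ(c)`, extended `n`-periodically: column `j` with `j ≡ i+1 (mod n)`
becomes `v j + c • v (j-1)`; all other columns are unchanged. -/
def bridgeCol (n : ℕ) (i : ℤ) (c : ℝ) {k : ℕ} (v : ℤ → Fin k → ℝ) : ℤ → Fin k → ℝ :=
  fun j => if (j - (i + 1)) % (n : ℤ) = 0 then v j + c • v (j - 1) else v j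

/-- The `n×2n` matrix with columns `v 1, …, v (2n)` is Plücker-symmetric:
`Δ_{R(I)} = Δ_I` for every `n`-element subset `I ⊆ [2n]`. -/
def PSym (n : ℕ) (v : ℤ → Fin n → ℝ) : Prop :=
  ∀ I ⊆ Finset.Icc (1 : ℤ) (2 * (n : ℤ)), I.card = n → Delta v (Rset n I) = Delta v I

/-- The affine simple transposition `sᵢ` modulo `n`: swaps `j ↔ j+1` for every `j ≡ i (mod n)`
and fixes all other integers. -/
def affS (n : ℕ) (i : ℤ) (j : ℤ) : ℤ :=
  if (j - i) % (n : ℤ) = 0 then j + 1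
  else if (j - (i + 1)) % (n : ℤ) = 0 then j - 1
  else j

open Finset

lemma Int.ModEq.eq_of_abs_sub_lt {N a b : ℤ} (h : a ≡ b [ZMOD N]) (hlt : |a - b| < N) : a = b :=
  sub_eq_zero.1 (Int.eq_zero_of_abs_lt_dvd (Int.modEq_iff_dvd.1 h.symm) hlt)

lemma Finset.mem_and_notMem_of_eq_insert_erase {α : Type*} [DecidableEq α] {s t : Finset α}
    {i j : α} (hcard : s.card = t.card) (hne : s ≠ t) (hs : s = insert j (t.erase i)) :
    i ∈ t ∧ j ∉ t := by
  subst hs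
  by_cases hi : i ∈ t
  · refine ⟨hi, fun hj => ?_⟩
    have hji : j ≠ i := by
      rintro rfl
      exact hne (insert_erase hi)
    rw [insert_eq_of_mem (mem_erase.2 ⟨hji, hj⟩)] at hcard
    have := card_erase_add_one hi
    omega
  · rw [erase_eq_of_notMem hi] at hcard hne
    have hj : j ∉ t := fun hj => hne (insert_eq_of_mem hj)
    have := card_insert_of_notMem hj
    omega

lemma fbar_mem_Icc {N : ℕ} (hN : 0 < N) (f : ℤ → ℤ) (j : ℤ) :
    fbar N f j ∈ Icc 1 (N : ℤ) := by
  have h0 := Int.emod_nonneg (f j - 1) (by omega : (N : ℤ) ≠ 0)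
  have h1 := Int.emod_lt_of_pos (f j - 1) (by omega : (0 : ℤ) < N)
  rw [mem_Icc, fbar]
  omega

lemma fbar_eq_iff_modEq {N : ℕ} {f : ℤ → ℤ} {i j : ℤ} (hi : i ∈ Icc 1 (N : ℤ)) :
    fbar N f j = i ↔ f j ≡ i [ZMOD N] := by
  rw [mem_Icc] at hi
  have hi' : (i - 1) % (N : ℤ) = i - 1 := Int.emod_eq_of_lt (by omega) (by omega)
  have hsub : f j - 1 ≡ i - 1 [ZMOD N] ↔ f j ≡ i [ZMOD N] :=
    ⟨fun h => by simpa using h.add_right 1, fun h => h.sub_right 1⟩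
  rw [← hsub, Int.ModEq, hi', fbar]
  omega

namespace IsBAP

variable {N k : ℕ} {f : ℤ → ℤ}

lemma map_add_mul (hf : IsBAP N k f) (i m : ℤ) : f (i + N * m) = f i + N * m := by
  simpa [mul_comm] using
    AddConstMapClass.map_add_zsmul (⟨f, hf.2.1⟩ : AddConstMap ℤ ℤ (N : ℤ) (N : ℤ)) i m

lemma modEq_of_map_modEq (hf : IsBAP N k f) {a b : ℤ} (h : f a ≡ f b [ZMOD N]) :
    a ≡ b [ZMOD N] := by
  obtain ⟨m, hm⟩ := Int.modEq_iff_dvd.1 h.symm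
  have : f a = f (b + N * m) := by rw [hf.map_add_mul]; omega
  rw [hf.1.1 this]
  exact Int.modEq_add_fac_self

lemma fbar_injOn (hf : IsBAP N k f) : Set.InjOn (fbar N f) (Icc 1 (N : ℤ)) := by
  intro a ha b hb hab
  have hN : 0 < N := by simp only [coe_Icc, Set.mem_Icc] at ha; omega
  have hc := fbar_mem_Icc hN f b
  have hfab : f a ≡ f b [ZMOD N] :=
    ((fbar_eq_iff_modEq hc).1 hab).trans ((fbar_eq_iff_modEq hc).1 rfl).symm
  simp only [coe_Icc, Set.mem_Icc] at ha hb
  exact (hf.modEq_of_map_modEq hfab).eq_of_abs_sub_lt (abs_sub_lt_iff.2 ⟨by omega, by omega⟩)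

lemma fbar_eq_self_iff (hf : IsBAP N k f) {j : ℤ} (hj : j ∈ Icc 1 (N : ℤ)) :
    fbar N f j = j ↔ f j = j ∨ f j = j + N := by
  obtain ⟨hlo, hhi⟩ := hf.2.2.1 j
  rw [fbar_eq_iff_modEq hj]
  constructor
  · intro h
    by_cases hjN : f j = j + N
    · exact Or.inr hjN
    · exact Or.inl (h.eq_of_abs_sub_lt (abs_sub_lt_iff.2 ⟨by omega, by omega⟩))
  · rintro (h | h)
    · rw [h]
    · rw [h]; exact Int.add_modulus_modEq_iff.2 rfl

lemma map_add_map_eq_of_fbar (hf : IsBAP N k f) {a b i : ℤ}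
    (hb : b ∈ Icc 1 (N : ℤ)) (hi : i ∈ Icc 1 (N : ℤ)) (hab : a + b = N + 1)
    (hfa : fbar N f a = i) (hfb : fbar N f b = N + 1 - i) (hb_loop : fbar N f b ≠ b) :
    f a + f b = 2 * N + 1 := by
  have hi' : (N : ℤ) + 1 - i ∈ Icc 1 (N : ℤ) := by rw [mem_Icc] at hi ⊢; omega
  have hmod : f a + f b ≡ 2 * N + 1 [ZMOD N] := by
    have := ((fbar_eq_iff_modEq hi).1 hfa).add ((fbar_eq_iff_modEq hi').1 hfb)
    rw [show i + (N + 1 - i) = 2 * N + 1 - N by ring] at this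
    exact this.trans (Int.sub_modulus_modEq_iff.2 rfl)
  rw [Ne, hf.fbar_eq_self_iff hb, not_or] at hb_loop
  have := hf.2.2.1 a
  have := hf.2.2.1 b
  exact hmod.eq_of_abs_sub_lt (abs_sub_lt_iff.2 ⟨by omega, by omega⟩)

lemma map_reflect_of_forall_mem_Icc (hf : IsBAP N k f)
    (h : ∀ a ∈ Icc 1 (N : ℤ), f (N + 1 - a) = 2 * N + 1 - f a) (a : ℤ) :
    f (N + 1 - a) = 2 * N + 1 - f a := by
  rcases N.eq_zero_or_pos with rfl | hN
  · have := hf.2.2.1 a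
    have := hf.2.2.1 (1 - a)
    push_cast at *
    omega
  · have h0 := Int.emod_nonneg (a - 1) (by omega : (N : ℤ) ≠ 0)
    have h1 := Int.emod_lt_of_pos (a - 1) (by omega : (0 : ℤ) < N)
    have hdiv := Int.mul_ediv_add_emod (a - 1) N
    set r := (a - 1) % (N : ℤ) + 1
    set m := (a - 1) / (N : ℤ)
    have hr := h r (mem_Icc.2 ⟨by omega, by omega⟩)
    have hfa := hf.map_add_mul r m
    have hfa' := hf.map_add_mul (N + 1 - r) (-m)
    rw [show r + N * m = a by omega] at hfa
    rw [show (N : ℤ) + 1 - r + N * -m = N + 1 - a by linarith] at hfa'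
    linarith

end IsBAP

lemma IsDGN.card_succ {N k : ℕ} {J : ℤ → Finset ℤ} (hJ : IsDGN N k J) {i : ℤ}
    (hi : i ∈ Icc 1 (N : ℤ)) : (J (i + 1)).card = k := by
  rw [mem_Icc] at hi
  rcases hi.2.lt_or_eq with hlt | rfl
  · exact (hJ.2 (i + 1) (mem_Icc.2 ⟨by omega, by omega⟩)).2.1
  · rw [add_comm, hJ.1 1]
    exact (hJ.2 1 (mem_Icc.2 ⟨le_rfl, by omega⟩)).2.1

namespace DGNAssoc

variable {N k : ℕ} {J : ℤ → Finset ℤ} {f : ℤ → ℤ}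

lemma exists_exchange (hJ : IsDGN N k J) (hassoc : DGNAssoc N J f) {i : ℤ}
    (hi : i ∈ Icc 1 (N : ℤ)) (hne : J i ≠ J (i + 1)) :
    ∃ j ∈ Icc 1 (N : ℤ), fbar N f j = i ∧ i ∉ J i ∧ i ∈ J (i + 1) ∧
      ∀ x, x ∈ J i ∧ x ∉ J (i + 1) ↔ x = j := by
  obtain ⟨j, hj, hji, hfj, hJi⟩ := (hassoc i hi).2.2 hne
  obtain ⟨hi_mem, hj_notMem⟩ := mem_and_notMem_of_eq_insert_erase
    ((hJ.2 i hi).2.1.trans (hJ.card_succ hi).symm) hne hJi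
  refine ⟨j, hj, hfj, by simp [hJi, hji.symm], hi_mem, fun x => ⟨?_, ?_⟩⟩
  · rintro ⟨hx, hx'⟩
    rw [hJi, mem_insert, mem_erase] at hx
    exact hx.resolve_right fun h => hx' h.2
  · rintro rfl
    exact ⟨hJi ▸ mem_insert_self _ _, hj_notMem⟩

lemma map_eq_add_of_mem (hJ : IsDGN N k J) (hassoc : DGNAssoc N J f) {i : ℤ}
    (hi : i ∈ Icc 1 (N : ℤ)) (hmem : i ∈ J i) : f i = i + N := by
  by_cases hne : J i = J (i + 1)
  · exact (hassoc i hi).2.1 hne (hne ▸ hmem)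
  · obtain ⟨_, _, _, hnotMem, _⟩ := hassoc.exists_exchange hJ hi hne
    exact absurd hmem hnotMem

lemma map_eq_self_of_notMem (hJ : IsDGN N k J) (hassoc : DGNAssoc N J f) {i : ℤ}
    (hi : i ∈ Icc 1 (N : ℤ)) (hnotMem : i ∉ J (i + 1)) : f i = i := by
  by_cases hne : J i = J (i + 1)
  · exact (hassoc i hi).1 hne hnotMem
  · obtain ⟨_, _, _, _, hmem, _⟩ := hassoc.exists_exchange hJ hi hne
    exact absurd hmem hnotMem

lemma fbar_eq_iff (hJ : IsDGN N k J) (hf : IsBAP N k f) (hassoc : DGNAssoc N J f) {i j : ℤ}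
    (hi : i ∈ Icc 1 (N : ℤ)) (hj : j ∈ Icc 1 (N : ℤ)) (hji : j ≠ i) :
    fbar N f j = i ↔ j ∈ J i ∧ j ∉ J (i + 1) := by
  constructor
  · intro hfj
    by_cases hne : J i = J (i + 1)
    · have hloop : f i = i ∨ f i = i + N := by
        by_cases hmem : i ∈ J (i + 1)
        · exact Or.inr ((hassoc i hi).2.1 hne hmem)
        · exact Or.inl ((hassoc i hi).1 hne hmem)
      exact absurd (hf.fbar_injOn hj hi (hfj.trans ((hf.fbar_eq_self_iff hi).2 hloop).symm)) hji
    · obtain ⟨j₀, hj₀, hfj₀, -, -, hexch⟩ := hassoc.exists_exchange hJ hi hne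
      exact (hexch j).2 (hf.fbar_injOn hj hj₀ (hfj.trans hfj₀.symm))
  · intro hx
    have hne : J i ≠ J (i + 1) := fun h => hx.2 (h ▸ hx.1)
    obtain ⟨j₀, -, hfj₀, -, -, hexch⟩ := hassoc.exists_exchange hJ hi hne
    rw [(hexch j).1 hx, hfj₀]

lemma eq_succ_of_fbar_eq_self (hJ : IsDGN N k J) (hf : IsBAP N k f) (hassoc : DGNAssoc N J f)
    {i : ℤ} (hi : i ∈ Icc 1 (N : ℤ)) (hloop : fbar N f i = i) : J i = J (i + 1) := by
  by_contra hne
  obtain ⟨j, hj, hfj, hnotMem, -, hexch⟩ := hassoc.exists_exchange hJ hi hne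
  have hji : j = i := hf.fbar_injOn hj hi (hfj.trans hloop.symm)
  exact hnotMem (hji ▸ ((hexch j).2 rfl).1)

end DGNAssoc

lemma reflect_mem_Rset_iff {n : ℕ} {I : Finset ℤ} {x : ℤ} (hx : x ∈ Icc 1 (2 * (n : ℤ))) :
    2 * (n : ℤ) + 1 - x ∈ Rset n I ↔ x ∉ I := by
  rw [mem_Icc] at hx
  simp only [Rset, mem_sdiff, mem_Icc, mem_image, not_exists, not_and]
  constructor
  · exact fun h hxI => h.2 x hxI rfl
  · exact fun h => ⟨by omega, fun y hy hyx => h (by rwa [show x = y by omega])⟩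

section Symmetric

variable {n : ℕ} {J : ℤ → Finset ℤ} {f : ℤ → ℤ}

lemma IsDGN.Rset_succ_eq (hJ : IsDGN (2 * n) n J)
    (hsym : ∀ i ∈ Icc (1 : ℤ) (2 * (n : ℤ)), Rset n (J i) = J (2 * (n : ℤ) + 2 - i))
    {i : ℤ} (hi : i ∈ Icc 1 (2 * (n : ℤ))) :
    Rset n (J (i + 1)) = J (2 * (n : ℤ) + 1 - i) := by
  rw [mem_Icc] at hi
  rcases hi.2.lt_or_eq with hlt | rfl
  · rw [hsym (i + 1) (mem_Icc.2 ⟨by omega, by omega⟩)]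
    congr 1
    ring
  · have hper : J (2 * n + 1) = J 1 := by simpa [add_comm] using hJ.1 1
    rw [hper, hsym 1 (mem_Icc.2 ⟨le_rfl, by omega⟩),
      show 2 * (n : ℤ) + 2 - 1 = 2 * n + 1 by ring, hper, add_sub_cancel_left]

lemma IsDGN.reflect_mem_iff (hJ : IsDGN (2 * n) n J)
    (hsym : ∀ i ∈ Icc (1 : ℤ) (2 * (n : ℤ)), Rset n (J i) = J (2 * (n : ℤ) + 2 - i))
    {i x : ℤ} (hi : i ∈ Icc 1 (2 * (n : ℤ))) (hx : x ∈ Icc 1 (2 * (n : ℤ))) :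
    (2 * (n : ℤ) + 1 - x ∈ J (2 * (n : ℤ) + 1 - i + 1) ↔ x ∉ J i) ∧
      (2 * (n : ℤ) + 1 - x ∈ J (2 * (n : ℤ) + 1 - i) ↔ x ∉ J (i + 1)) := by
  rw [show 2 * (n : ℤ) + 1 - i + 1 = 2 * n + 2 - i by ring, ← hsym i hi,
    ← hJ.Rset_succ_eq hsym hi]
  exact ⟨reflect_mem_Rset_iff hx, reflect_mem_Rset_iff hx⟩

theorem DGNAssoc.map_reflect (hJ : IsDGN (2 * n) n J) (hf : IsBAP (2 * n) n f)
    (hassoc : DGNAssoc (2 * n) J f)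
    (hsym : ∀ i ∈ Icc (1 : ℤ) (2 * (n : ℤ)), Rset n (J i) = J (2 * (n : ℤ) + 2 - i))
    {a : ℤ} (ha : a ∈ Icc 1 (2 * (n : ℤ))) :
    f (2 * n + 1 - a) = 2 * (2 * n) + 1 - f a := by
  have ha' : 2 * (n : ℤ) + 1 - a ∈ Icc 1 (2 * (n : ℤ)) := by rw [mem_Icc] at ha ⊢; omega
  have hrefl := hJ.reflect_mem_iff hsym ha ha
  by_cases hloop : fbar (2 * n) f a = a
  · have hJa := hassoc.eq_succ_of_fbar_eq_self hJ hf ha hloop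
    by_cases hmem : a ∈ J a
    · have h₁ := hassoc.map_eq_add_of_mem hJ ha hmem
      have h₂ := hassoc.map_eq_self_of_notMem hJ ha' fun h => hrefl.1.1 h hmem
      omega
    · have h₁ := hassoc.map_eq_self_of_notMem hJ ha (hJa ▸ hmem)
      have h₂ := hassoc.map_eq_add_of_mem hJ ha' (hrefl.2.2 (hJa ▸ hmem))
      omega
  · set i := fbar (2 * n) f a with hi_def
    have hi : i ∈ Icc 1 (2 * (n : ℤ)) :=
      fbar_mem_Icc (N := 2 * n) (by rw [mem_Icc] at ha; omega) f a
    have hi' : 2 * (n : ℤ) + 1 - i ∈ Icc 1 (2 * (n : ℤ)) := by rw [mem_Icc] at hi ⊢; omega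
    obtain ⟨haJ, haJ'⟩ := (hassoc.fbar_eq_iff hJ hf hi ha (Ne.symm hloop)).1 hi_def.symm
    have hrefl_i := hJ.reflect_mem_iff hsym hi ha
    have hfa' : fbar (2 * n) f (2 * n + 1 - a) = 2 * n + 1 - i :=
      (hassoc.fbar_eq_iff hJ hf hi' ha' fun h => hloop (by omega)).2
        ⟨hrefl_i.2.2 haJ', fun h => hrefl_i.1.1 h haJ⟩
    have := hf.map_add_map_eq_of_fbar ha' hi (by push_cast; ring) hi_def.symm
      (by push_cast; exact hfa') (by rw [hfa']; omega)
    omega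

end Symmetric

/-- If a dual Grassmann necklace of type `(n,2n)` satisfies `R(J_i) = J_{i'+1}`
for all `i ∈ [2n]` (with `i' = 2n+1-i`, indices mod `2n`), then its associated bounded
affine permutation is symmetric. -/
theorem dual_necklace_symmetry_implies_BAP_symmetric (n : ℕ) (J : ℤ → Finset ℤ)
    (hJ : IsDGN (2 * n) n J) (f : ℤ → ℤ) (hf : IsBAP (2 * n) n f)
    (hassoc : DGNAssoc (2 * n) J f)
    (hsymN : ∀ i ∈ Finset.Icc (1 : ℤ) (2 * (n : ℤ)),
      Rset n (J i) = J (2 * (n : ℤ) + 2 - i)) :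
    IsSymmBAP n f := by
  intro a
  have := hf.map_reflect_of_forall_mem_Icc
    (fun a ha => by push_cast at ha ⊢; rw [hassoc.map_reflect hJ hf hsymN ha]) a
  push_cast at this
  linarith
end

section
/- Let M be a real n×2n matrix that is Plücker-symmetric, let i ∈ [2n−1] with i ≠ n, and let c ∈ ℝ. Then M·x_i(c)·x_{2n−i}(c) is Plücker-symmetric. -/
/-!
Right multiplication by `x_{j-1}(c)` adds `c` times column `j-1` to column `j`, so by
multilinearity `Δ_I` gains `c · Δ_{I - j + (j-1)}` when `j ∈ I` and `j - 1 ∉ I`. The involution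
`I ↦ R(I)` conjugates this shift at `j` into the shift at `2n+2-j`; for `j = i+1` that is
`2n-i+1`, the column moved by `x_{2n-i}(c)`. Hence in the expansion of `Δ_I(M xᵢ(c) x_{2n-i}(c))`
the substitution `I ↦ R(I)` swaps the two terms linear in `c` and fixes the other two; for the
`c²` term this uses that the two shifts commute, as `{i, i+1}` and `{2n-i, 2n-i+1}` are disjoint
when `i ≠ n`.
-/

theorem Finset.orderEmbOfFin_insert_erase {α : Type*} [LinearOrder α] {s : Finset α} {k : ℕ}
    (h : s.card = k) {m : Fin k} {a b : α} (hm : s.orderEmbOfFin h m = a) (hb : b ∉ s)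
    (hbetween : ∀ x ∈ s, x ≠ a → (x < a ↔ x < b)) (h' : (insert b (s.erase a)).card = k) :
    ⇑((insert b (s.erase a)).orderEmbOfFin h') = Function.update (s.orderEmbOfFin h) m b := by
  subst hm
  set σ := s.orderEmbOfFin h
  have hσ : ∀ l, σ l ∈ s := s.orderEmbOfFin_mem h
  refine (Finset.orderEmbOfFin_unique h' (fun l => ?_) fun l l' hll' => ?_).symm
  · rcases eq_or_ne l m with rfl | hl
    · simp
    · rw [Function.update_of_ne hl]
      exact mem_insert_of_mem (mem_erase.2 ⟨σ.injective.ne hl, hσ l⟩)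
  · have hσll' : σ l < σ l' := σ.strictMono hll'
    rcases eq_or_ne l m with rfl | hl
    · have hl' : l' ≠ l := hll'.ne'
      rw [Function.update_self, Function.update_of_ne hl']
      have hnot : ¬ σ l' < b := fun hlt =>
        hσll'.not_gt ((hbetween _ (hσ l') (σ.injective.ne hl')).2 hlt)
      exact lt_of_le_of_ne (not_lt.1 hnot) fun hbl' => hb (hbl' ▸ hσ l')
    · rw [Function.update_of_ne hl]
      rcases eq_or_ne l' m with rfl | hl'
      · rw [Function.update_self]
        exact (hbetween _ (hσ l) (σ.injective.ne hl)).1 hσll'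
      · rwa [Function.update_of_ne hl']

theorem Delta_congr {k : ℕ} {v w : ℤ → Fin k → ℝ} {I : Finset ℤ} (h : ∀ x ∈ I, w x = v x) :
    Delta w I = Delta v I := by
  unfold Delta
  split
  · congr 1
    ext r m
    exact congrFun (h _ (Finset.coe_mem _)) r
  · rfl

theorem Delta_of_card_ne {k : ℕ} (v : ℤ → Fin k → ℝ) {I : Finset ℤ} (h : I.card ≠ k) :
    Delta v I = 0 :=
  dif_neg h

theorem Delta_eq_det_rows {k : ℕ} (v : ℤ → Fin k → ℝ) {I : Finset ℤ} (hI : I.card = k) :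
    Delta v I = (Matrix.of fun m => v (I.orderEmbOfFin hI m)).det := by
  rw [Delta, dif_pos hI, ← Matrix.det_transpose]
  rfl

def shiftDown (j : ℤ) (I : Finset ℤ) : Finset ℤ := insert (j - 1) (I.erase j)

def shiftTerm (j : ℤ) : (Finset ℤ → ℝ) →ₗ[ℝ] Finset ℤ → ℝ where
  toFun F I := if j ∈ I ∧ j - 1 ∉ I then F (shiftDown j I) else 0
  map_add' F G := by
    ext I
    split_ifs <;> simp [*]
  map_smul' c F := by
    ext I
    split_ifs <;> simp [*]

theorem shiftTerm_apply (j : ℤ) (F : Finset ℤ → ℝ) (I : Finset ℤ) :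
    shiftTerm j F I = if j ∈ I ∧ j - 1 ∉ I then F (shiftDown j I) else 0 :=
  rfl

theorem card_shiftDown {j : ℤ} {I : Finset ℤ} (hj : j ∈ I) (hj1 : j - 1 ∉ I) :
    (shiftDown j I).card = I.card := by
  rw [shiftDown, Finset.card_insert_of_notMem fun h => hj1 (Finset.mem_of_mem_erase h),
    Finset.card_erase_add_one hj]

theorem mem_shiftDown {j x : ℤ} {I : Finset ℤ} :
    x ∈ shiftDown j I ↔ x = j - 1 ∨ x ≠ j ∧ x ∈ I := by
  rw [shiftDown, Finset.mem_insert, Finset.mem_erase]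

theorem Delta_shiftDown {k : ℕ} (v : ℤ → Fin k → ℝ) {I : Finset ℤ} (hI : I.card = k) {m : Fin k}
    {j : ℤ} (hm : I.orderEmbOfFin hI m = j) (hj1 : j - 1 ∉ I) :
    Delta v (shiftDown j I) = ((Matrix.of fun l => v (I.orderEmbOfFin hI l)).updateRow m
      (v (j - 1))).det := by
  have hj : j ∈ I := hm ▸ I.orderEmbOfFin_mem hI m
  have hI' : (shiftDown j I).card = k := by rw [card_shiftDown hj hj1, hI]
  have hσ' : ⇑((shiftDown j I).orderEmbOfFin hI') =
      Function.update (I.orderEmbOfFin hI) m (j - 1) :=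
    Finset.orderEmbOfFin_insert_erase hI hm hj1
      (fun x hx _ => by have : x ≠ j - 1 := fun h => hj1 (h ▸ hx); omega) hI'
  rw [Delta_eq_det_rows _ hI', hσ']
  exact congrArg (fun M => Matrix.det (Matrix.of M)) (Function.comp_update v _ m (j - 1))

/-- The columns of `M · x_{j-1}(c)`. -/
def addPrevCol {k : ℕ} (j : ℤ) (c : ℝ) (v : ℤ → Fin k → ℝ) : ℤ → Fin k → ℝ :=
  Function.update v j (v j + c • v (j - 1))

theorem Delta_addPrevCol {k : ℕ} (j : ℤ) (c : ℝ) (v : ℤ → Fin k → ℝ) :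
    Delta (addPrevCol j c v) = Delta v + c • shiftTerm j (Delta v) := by
  ext I
  rw [Pi.add_apply, Pi.smul_apply, smul_eq_mul, shiftTerm_apply]
  by_cases hI : I.card = k
  swap
  · rw [Delta_of_card_ne _ hI, Delta_of_card_ne _ hI]
    split_ifs with hj
    · rw [Delta_of_card_ne _ (by rwa [card_shiftDown hj.1 hj.2]), mul_zero, add_zero]
    · rw [mul_zero, add_zero]
  by_cases hj : j ∈ I
  swap
  · rw [if_neg fun h => hj h.1, mul_zero, add_zero]
    exact Delta_congr fun x hx => Function.update_of_ne (ne_of_mem_of_not_mem hx hj) _ _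
  obtain ⟨m, hm⟩ : ∃ m, I.orderEmbOfFin hI m = j := by
    rw [← Set.mem_range, Finset.range_orderEmbOfFin]
    exact hj
  set A : Matrix (Fin k) (Fin k) ℝ := Matrix.of fun l => v (I.orderEmbOfFin hI l)
  have hrows : (Matrix.of fun l => addPrevCol j c v (I.orderEmbOfFin hI l)) =
      A.updateRow m (v j + c • v (j - 1)) := by
    have := Function.update_comp_eq_of_injective v (I.orderEmbOfFin hI).injective m
      (v j + c • v (j - 1))
    rw [hm] at this
    exact congrArg Matrix.of this
  have hAm : A.updateRow m (v j) = A := hm ▸ A.updateRow_eq_self m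
  rw [Delta_eq_det_rows _ hI, hrows, Matrix.det_updateRow_add, Matrix.det_updateRow_smul, hAm,
    ← Delta_eq_det_rows _ hI]
  congr 2
  split_ifs with hj1
  · exact (Delta_shiftDown v hI hm hj1.2).symm
  · obtain ⟨m', hm'⟩ : ∃ m', I.orderEmbOfFin hI m' = j - 1 := by
      rw [← Set.mem_range, Finset.range_orderEmbOfFin]
      exact not_not.1 fun h => hj1 ⟨hj, h⟩
    refine Matrix.det_zero_of_row_eq (i := m) (j := m') ?_ ?_
    · rintro rfl
      omega
    · rw [Matrix.updateRow_self, Matrix.updateRow_ne, ← hm']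
      · rfl
      · rintro rfl
        omega

theorem shiftTerm_comm {j j' : ℤ} (h : j ≠ j') (h₁ : j ≠ j' - 1) (h₂ : j - 1 ≠ j')
    (F : Finset ℤ → ℝ) : shiftTerm j (shiftTerm j' F) = shiftTerm j' (shiftTerm j F) := by
  ext I
  have hcomm : shiftDown j (shiftDown j' I) = shiftDown j' (shiftDown j I) := by
    ext x
    simp only [mem_shiftDown]
    grind
  simp only [shiftTerm_apply, mem_shiftDown, hcomm]
  split_ifs <;> grind

theorem mem_Rset {n : ℕ} {I : Finset ℤ} {x : ℤ} :
    x ∈ Rset n I ↔ x ∈ Finset.Icc 1 (2 * (n : ℤ)) ∧ 2 * (n : ℤ) + 1 - x ∉ I := by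
  rw [Rset, Finset.mem_sdiff, Finset.mem_image]
  refine and_congr_right fun _ => not_congr ⟨?_, fun hx => ⟨_, hx, by ring⟩⟩
  rintro ⟨y, hy, rfl⟩
  rwa [sub_sub_cancel]

theorem card_Rset_add_card {n : ℕ} {I : Finset ℤ} (hI : I ⊆ Finset.Icc 1 (2 * (n : ℤ))) :
    (Rset n I).card + I.card = 2 * n := by
  have himage : (I.image fun x => 2 * (n : ℤ) + 1 - x) ⊆ Finset.Icc 1 (2 * (n : ℤ)) := by
    intro x hx
    obtain ⟨y, hy, rfl⟩ := Finset.mem_image.1 hx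
    have := Finset.mem_Icc.1 (hI hy)
    rw [Finset.mem_Icc]
    omega
  rw [Rset, Finset.card_sdiff_of_subset himage,
    Finset.card_image_of_injective _ fun a b hab => by simpa using hab, Int.card_Icc,
    Nat.sub_add_cancel (by simpa using Finset.card_le_card hI)]
  omega

theorem PSym.Delta_Rset {n : ℕ} {v : ℤ → Fin n → ℝ} (hv : PSym n v) (I : Finset ℤ)
    (hI : I ⊆ Finset.Icc 1 (2 * (n : ℤ))) : Delta v (Rset n I) = Delta v I := by
  by_cases hcard : I.card = n
  · exact hv I hI hcard
  · have := card_Rset_add_card hI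
    rw [Delta_of_card_ne _ hcard, Delta_of_card_ne _ (by omega)]

theorem Rset_shiftDown {n : ℕ} {j j' : ℤ} (hj : 2 ≤ j) (hj' : 2 ≤ j')
    (hjj' : j + j' = 2 * (n : ℤ) + 2) (I : Finset ℤ) :
    Rset n (shiftDown j' I) = shiftDown j (Rset n I) := by
  ext x
  simp only [mem_Rset, mem_shiftDown, Finset.mem_Icc]
  grind

theorem shiftTerm_Rset {n : ℕ} {F G : Finset ℤ → ℝ}
    (hFG : ∀ I ⊆ Finset.Icc 1 (2 * (n : ℤ)), F (Rset n I) = G I) {j j' : ℤ} (hj : 2 ≤ j)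
    (hj' : 2 ≤ j') (hjj' : j + j' = 2 * (n : ℤ) + 2) {I : Finset ℤ}
    (hI : I ⊆ Finset.Icc 1 (2 * (n : ℤ))) :
    shiftTerm j F (Rset n I) = shiftTerm j' G I := by
  have hcond : j ∈ Rset n I ∧ j - 1 ∉ Rset n I ↔ j' ∈ I ∧ j' - 1 ∉ I := by
    simp only [mem_Rset, Finset.mem_Icc]
    rw [show 2 * (n : ℤ) + 1 - j = j' - 1 by omega, show 2 * (n : ℤ) + 1 - (j - 1) = j' by omega]
    grind
  have hsub : shiftDown j' I ⊆ Finset.Icc 1 (2 * (n : ℤ)) := by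
    intro x hx
    rcases mem_shiftDown.1 hx with rfl | ⟨-, hx⟩
    · rw [Finset.mem_Icc]
      omega
    · exact hI hx
  simp only [shiftTerm_apply, hcond, ← Rset_shiftDown hj hj' hjj', hFG _ hsub]

theorem addPrevCol_eqOn {k : ℕ} {u u' : ℤ → Fin k → ℝ} {s : Set ℤ} (h : Set.EqOn u u' s) {j : ℤ}
    (hj : j ∈ s) (hj1 : j - 1 ∈ s) (c : ℝ) :
    Set.EqOn (addPrevCol j c u) (addPrevCol j c u') s := by
  intro x hx
  simp only [addPrevCol, Function.update_apply, h hx, h hj, h hj1]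

theorem bridgeCol_eqOn_addPrevCol {N : ℕ} {k : ℕ} {i : ℤ} (hi : 0 ≤ i) (hiN : i < N) (c : ℝ)
    (v : ℤ → Fin k → ℝ) : Set.EqOn (bridgeCol N i c v) (addPrevCol (i + 1) c v) (Set.Icc 1 N) := by
  intro x hx
  have hmod : (x - (i + 1)) % (N : ℤ) = 0 ↔ x = i + 1 := by
    rw [← Int.dvd_iff_emod_eq_zero, ← sub_eq_zero]
    refine ⟨fun hdvd => Int.eq_zero_of_abs_lt_dvd hdvd (abs_lt.2 ⟨?_, ?_⟩), fun h => h ▸ dvd_zero _⟩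
    all_goals linarith [hx.1, hx.2]
  simp only [bridgeCol, addPrevCol, Function.update_apply, hmod]
  split_ifs with h
  · rw [h]
  · rfl

theorem pluckerSymmetric_mul_bridge_pair_general (n : ℕ) (v : ℤ → Fin n → ℝ)
    (hsym : PSym n v) (i : ℤ) (hi1 : 1 ≤ i) (hi2 : i ≤ 2 * (n : ℤ) - 1)
    (hne : i ≠ (n : ℤ)) (c : ℝ) :
    PSym n (bridgeCol (2 * n) (2 * (n : ℤ) - i) c (bridgeCol (2 * n) i c v)) := by
  have hN : ((2 * n : ℕ) : ℤ) = 2 * (n : ℤ) := by push_cast; ring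
  have hw : Set.EqOn (bridgeCol (2 * n) (2 * (n : ℤ) - i) c (bridgeCol (2 * n) i c v))
      (addPrevCol (2 * (n : ℤ) - i + 1) c (addPrevCol (i + 1) c v)) (Set.Icc 1 (2 * (n : ℤ))) := by
    have h₁ := bridgeCol_eqOn_addPrevCol (N := 2 * n) (i := i) (by omega) (by omega) c v
    have h₂ := bridgeCol_eqOn_addPrevCol (N := 2 * n) (i := 2 * (n : ℤ) - i) (by omega) (by omega)
      c (bridgeCol (2 * n) i c v)
    rw [hN] at h₁ h₂
    exact h₂.trans (addPrevCol_eqOn h₁ ⟨by omega, by omega⟩ ⟨by omega, by omega⟩ c)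
  have hΔ : ∀ I ⊆ Finset.Icc 1 (2 * (n : ℤ)), Delta (bridgeCol (2 * n) (2 * (n : ℤ) - i) c
      (bridgeCol (2 * n) i c v)) I =
      Delta (addPrevCol (2 * (n : ℤ) - i + 1) c (addPrevCol (i + 1) c v)) I :=
    fun I hI => Delta_congr fun x hx => hw (Finset.mem_Icc.1 (hI hx))
  intro I hI _
  have hsum : i + 1 + (2 * (n : ℤ) - i + 1) = 2 * (n : ℤ) + 2 := by ring
  have hsum' : 2 * (n : ℤ) - i + 1 + (i + 1) = 2 * (n : ℤ) + 2 := by ring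
  have hR : Rset n I ⊆ Finset.Icc 1 (2 * (n : ℤ)) := Finset.sdiff_subset
  rw [hΔ _ hI, hΔ _ hR, Delta_addPrevCol, Delta_addPrevCol]
  simp only [map_add, map_smul, Pi.add_apply, Pi.smul_apply, smul_eq_mul]
  rw [hsym.Delta_Rset I hI, shiftTerm_Rset hsym.Delta_Rset (by omega) (by omega) hsum hI,
    shiftTerm_Rset hsym.Delta_Rset (by omega) (by omega) hsum' hI,
    shiftTerm_Rset (fun K hK => shiftTerm_Rset hsym.Delta_Rset (by omega) (by omega) hsum hK)
      (by omega) (by omega) hsum' hI,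
    shiftTerm_comm (by omega) (by omega) (by omega) (Delta v)]
  ring

/-- If the `n×2n` matrix `M` is Plücker-symmetric and `i ∈ [2n-1]`, `i ≠ n`,
then `M·xᵢ(c)·x_{2n-i}(c)` is Plücker-symmetric. -/
theorem pluckerSymmetric_mul_bridge_pair (n : ℕ) (v : ℤ → Fin n → ℝ)
    (hper : ∀ j : ℤ, v (j + 2 * (n : ℤ)) = v j)
    (hsym : PSym n v) (i : ℤ) (hi1 : 1 ≤ i) (hi2 : i ≤ 2 * (n : ℤ) - 1)
    (hne : i ≠ (n : ℤ)) (c : ℝ) :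
    PSym n (bridgeCol (2 * n) (2 * (n : ℤ) - i) c (bridgeCol (2 * n) i c v)) :=
  pluckerSymmetric_mul_bridge_pair_general n v hsym i hi1 hi2 hne c
end
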